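/- For every positive integer k, S(k, k+3) = (k+3)(k+4)² / (48·k!). -/
import Mathlib


/-- The `k`-th elementary symmetric function of `1, 1/2, …, 1/n`. -/
def S (k n : ℕ) : ℚ :=
  ∑ A ∈ Finset.powersetCard k (Finset.Icc 1 n), ∏ i ∈ A, (1 / (i : ℚ))

lemma S_zero (n : ℕ) : S 0 n = 1 := by
  simp [S]

lemma S_rec (k n : ℕ) :
    S (k + 1) (n + 1) = S (k + 1) n + S k n / (n + 1 : ℚ) := by
  have hnot : (n + 1) ∉ Finset.Icc 1 n := by simp
  have hIcc : Finset.Icc 1 (n + 1) = insert (n + 1) (Finset.Icc 1 n) := by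
    ext x; simp [Finset.mem_Icc]; omega
  rw [S, hIcc, Finset.powersetCard_succ_insert hnot, Finset.sum_union, Finset.sum_image]
  · congr 1
    rw [S, Finset.sum_div]
    apply Finset.sum_congr rfl
    intro A hA
    have hAn : (n + 1) ∉ A := fun h => hnot ((Finset.mem_powersetCard.1 hA).1 h)
    rw [Finset.prod_insert hAn]
    push_cast
    ring
  · intro A hA B hB h
    have hAn : (n + 1) ∉ A := fun h => hnot ((Finset.mem_powersetCard.1 hA).1 h)
    have hBn : (n + 1) ∉ B := fun h => hnot ((Finset.mem_powersetCard.1 hB).1 h)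
    have := congrArg (fun t => Finset.erase t (n + 1)) h
    simpa [Finset.erase_insert hAn, Finset.erase_insert hBn] using this
  · rw [Finset.disjoint_right]
    intro A hA hA'
    obtain ⟨B, hB, rfl⟩ := Finset.mem_image.1 hA
    have : (n+1) ∈ insert (n+1) B := Finset.mem_insert_self _ _
    exact hnot ((Finset.mem_powersetCard.1 hA').1 this)

lemma fact_pos (k : ℕ) : (0 : ℚ) < (Nat.factorial k : ℚ) := by
  exact_mod_cast Nat.factorial_pos k

lemma S_self (k : ℕ) : S k k = 1 / (Nat.factorial k : ℚ) := by
  induction k with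
  | zero => simp [S_zero]
  | succ k ih =>
      have hempty : S (k + 1) k = 0 := by
        rw [S, Finset.powersetCard_eq_empty.2 (by rw [Nat.card_Icc]; omega), Finset.sum_empty]
      rw [S_rec, hempty, ih, Nat.factorial_succ]
      have := fact_pos k
      push_cast
      field_simp
      ring

lemma S_one (k : ℕ) : S k (k + 1) = ((k : ℚ) + 2) / (2 * (Nat.factorial k : ℚ)) := by
  induction k with
  | zero => norm_num [S_zero]
  | succ k ih =>
      rw [show k + 1 + 1 = (k + 1) + 1 from rfl, S_rec, S_self, ih, Nat.factorial_succ]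
      have := fact_pos k
      push_cast
      field_simp
      ring

lemma S_two (k : ℕ) : S k (k + 2) =
    (3 * (k : ℚ) + 8) * ((k : ℚ) + 3) / (24 * (Nat.factorial k : ℚ)) := by
  induction k with
  | zero => norm_num [S_zero]
  | succ k ih =>
      rw [show k + 1 + 2 = (k + 2) + 1 from rfl, S_rec, S_one, ih, Nat.factorial_succ]
      have := fact_pos k
      push_cast
      field_simp
      ring

lemma S_three (k : ℕ) : S k (k + 3) =
    ((k : ℚ) + 3) * ((k : ℚ) + 4) ^ 2 / (48 * (Nat.factorial k : ℚ)) := by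
  induction k with
  | zero => norm_num [S_zero]
  | succ k ih =>
      rw [show k + 1 + 3 = (k + 3) + 1 from rfl, S_rec, S_two, ih, Nat.factorial_succ]
      have := fact_pos k
      push_cast
      field_simp
      ring

theorem stmt_9 (k : ℕ) (hk : 1 ≤ k) :
    S k (k + 3) = ((k : ℚ) + 3) * ((k : ℚ) + 4) ^ 2 / (48 * (Nat.factorial k : ℚ)) :=
  S_three k
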